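/- arXiv:2206.03727 — 6 statements merged into one kernel-verified Lean document; each statement's English description precedes it below -/
import Mathlib

section
/- Let ψ : ℝ → ℝ be measurable with ∫_ℝ (1 + |x|)·|ψ(x)| dx < ∞ and ∫_ℝ ψ(x) dx = 0. Let 0 < α ≤ 1 and let f : ℝ → ℝ be bounded, measurable, and Hölder continuous with exponent α and constant C, i.e. |f(x + δ) − f(x)| ≤ C·|δ|^α for all x, δ ∈ ℝ. Then there exists a constant C′ ≥ 0 (one may take C′ = C·∫_ℝ (1 + |y|)·|ψ(y)| dy) such that for every a ≠ 0 and every b ∈ ℝ, |∫_ℝ f(x)·|a|^{−1/2}·ψ((x − b)/a) dx| ≤ C′·|a|^{α + 1/2}. -/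
open MeasureTheory Real

/-- **Theorem 3.1** (Lipschitz constraint of wavelet base in the Hölder space).
If `ψ` is measurable with `∫ (1 + |x|)·|ψ x| < ∞` and `∫ ψ = 0`, and `f` is bounded,
measurable and Hölder continuous with exponent `α ∈ (0, 1]` and constant `C`, then there is
`C' ≥ 0` such that `|⟨f, ψ^{a,b}⟩| ≤ C' · |a| ^ (α + 1/2)` for all `a ≠ 0`, `b`. -/
theorem wavelet_coeff_decay_of_holder
    (ψ f : ℝ → ℝ) (α C : ℝ)
    (hψ_meas : Measurable ψ)
    (hψ_int : Integrable (fun x : ℝ => (1 + |x|) * |ψ x|))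
    (hψ_zero : (∫ x : ℝ, ψ x) = 0)
    (hα_pos : 0 < α) (hα_le : α ≤ 1)
    (hf_meas : Measurable f)
    (hf_bdd : ∃ B : ℝ, ∀ x : ℝ, |f x| ≤ B)
    (hf_holder : ∀ x δ : ℝ, |f (x + δ) - f x| ≤ C * |δ| ^ α) :
    ∃ C' : ℝ, 0 ≤ C' ∧ ∀ a : ℝ, a ≠ 0 → ∀ b : ℝ,
      |∫ x : ℝ, f x * (|a| ^ (-(1 : ℝ) / 2) * ψ ((x - b) / a))| ≤
        C' * |a| ^ (α + 1 / 2) := by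
  obtain ⟨B, hB⟩ := hf_bdd
  set I : ℝ := ∫ x : ℝ, (1 + |x|) * |ψ x| with hI
  have hI_nonneg : 0 ≤ I :=
    integral_nonneg fun x => mul_nonneg (by positivity) (abs_nonneg _)
  have hC_nonneg : 0 ≤ C := by
    have h := hf_holder 0 1
    have : |(1 : ℝ)| ^ α = 1 := by simp
    rw [this, mul_one] at h
    exact le_trans (abs_nonneg _) h
  -- |ψ| is integrable
  have hψ_integrable : Integrable ψ := by
    refine hψ_int.mono hψ_meas.aestronglyMeasurable (Filter.Eventually.of_forall fun x => ?_)
    have h1 : ‖ψ x‖ = |ψ x| := rfl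
    have h2 : ‖(1 + |x|) * |ψ x|‖ = (1 + |x|) * |ψ x| := by
      rw [Real.norm_eq_abs, abs_of_nonneg (mul_nonneg (by positivity) (abs_nonneg _))]
    rw [h1, h2]
    nlinarith [abs_nonneg x, abs_nonneg (ψ x)]
  refine ⟨C * I, mul_nonneg hC_nonneg hI_nonneg, fun a ha b => ?_⟩
  have hta : (0 : ℝ) < |a| := abs_pos.mpr ha
  -- Step 1: pull out the constant and change variables
  have key : (∫ x : ℝ, f x * (|a| ^ (-(1 : ℝ) / 2) * ψ ((x - b) / a)))
      = |a| ^ (-(1 : ℝ) / 2) * (|a| * ∫ y : ℝ, f (a * y + b) * ψ y) := by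
    have h1 : (∫ x : ℝ, f x * (|a| ^ (-(1 : ℝ) / 2) * ψ ((x - b) / a)))
        = |a| ^ (-(1 : ℝ) / 2) * ∫ x : ℝ, f x * ψ ((x - b) / a) := by
      rw [← integral_const_mul]
      congr 1; ext x; ring
    rw [h1]
    congr 1
    have h2 : ∀ x : ℝ, f x * ψ ((x - b) / a)
        = (fun y => f (a * y + b) * ψ y) ((x - b) / a) := by
      intro x
      simp only
      rw [mul_div_cancel₀ _ ha, sub_add_cancel]
    simp_rw [h2]
    have h3 : (∫ x : ℝ, (fun y => f (a * y + b) * ψ y) ((x - b) / a))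
        = ∫ x : ℝ, (fun z => (fun y => f (a * y + b) * ψ y) (z / a)) (x - b) := by
      simp
    rw [h3, integral_sub_right_eq_self (fun z => (fun y => f (a * y + b) * ψ y) (z / a)) b,
      MeasureTheory.Measure.integral_comp_div (fun y => f (a * y + b) * ψ y) a]
    simp [smul_eq_mul]
  -- Step 2: integrability of the transformed integrand
  have hmeas_comp : Measurable fun y : ℝ => f (a * y + b) :=
    hf_meas.comp ((measurable_id.const_mul a).add_const b)
  have hint1 : Integrable fun y : ℝ => f (a * y + b) * ψ y := by
    refine Integrable.mono' (hψ_integrable.abs.const_mul B)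
      (hmeas_comp.mul hψ_meas).aestronglyMeasurable
      (Filter.Eventually.of_forall fun y => ?_)
    rw [Real.norm_eq_abs, abs_mul]
    exact mul_le_mul_of_nonneg_right (hB _) (abs_nonneg _)
  have hint2 : Integrable fun y : ℝ => f b * ψ y := hψ_integrable.const_mul _
  -- Step 3: use ∫ ψ = 0 to subtract f b
  have hsub : (∫ y : ℝ, f (a * y + b) * ψ y)
      = ∫ y : ℝ, (f (a * y + b) - f b) * ψ y := by
    rw [show (fun y : ℝ => (f (a * y + b) - f b) * ψ y)
        = fun y : ℝ => f (a * y + b) * ψ y - f b * ψ y by ext y; ring,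
      integral_sub hint1 hint2, integral_const_mul, hψ_zero, mul_zero, sub_zero]
  -- Step 4: bound the integral
  have hbound : |∫ y : ℝ, (f (a * y + b) - f b) * ψ y|
      ≤ C * |a| ^ α * I := by
    have h5 : (C * |a| ^ α * I) = ∫ y : ℝ, C * |a| ^ α * ((1 + |y|) * |ψ y|) := by
      rw [integral_const_mul]
    rw [← Real.norm_eq_abs, h5]
    refine norm_integral_le_of_norm_le (hψ_int.const_mul _)
      (Filter.Eventually.of_forall fun y => ?_)
    rw [Real.norm_eq_abs, abs_mul]
    have hy : |y| ^ α ≤ 1 + |y| := by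
      rcases le_total (|y|) 1 with h | h
      · have : |y| ^ α ≤ 1 := Real.rpow_le_one (abs_nonneg _) h hα_pos.le
        nlinarith [abs_nonneg y]
      · have h1 : |y| ^ α ≤ |y| ^ (1 : ℝ) :=
          Real.rpow_le_rpow_of_exponent_le h hα_le
        rw [Real.rpow_one] at h1
        linarith
    have hhol : |f (a * y + b) - f b| ≤ C * |a| ^ α * |y| ^ α := by
      have := hf_holder b (a * y)
      rw [add_comm b (a * y)] at this
      calc |f (a * y + b) - f b| ≤ C * |a * y| ^ α := this
        _ = C * (|a| ^ α * |y| ^ α) := by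
            rw [abs_mul, Real.mul_rpow (abs_nonneg _) (abs_nonneg _)]
        _ = C * |a| ^ α * |y| ^ α := by ring
    calc |f (a * y + b) - f b| * |ψ y|
        ≤ C * |a| ^ α * |y| ^ α * |ψ y| :=
          mul_le_mul_of_nonneg_right hhol (abs_nonneg _)
      _ ≤ C * |a| ^ α * ((1 + |y|) * |ψ y|) := by
          have hCa : 0 ≤ C * |a| ^ α :=
            mul_nonneg hC_nonneg (Real.rpow_nonneg (abs_nonneg _) _)
          rw [mul_assoc]
          exact mul_le_mul_of_nonneg_left
            (mul_le_mul_of_nonneg_right hy (abs_nonneg _)) hCa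
  -- Conclude
  rw [key, hsub]
  rw [abs_mul, abs_mul]
  have h6 : |(|a| ^ (-(1 : ℝ) / 2))| = |a| ^ (-(1 : ℝ) / 2) :=
    abs_of_nonneg (Real.rpow_nonneg (abs_nonneg _) _)
  have h7 : |(|a|)| = |a| := abs_abs a
  rw [h6, h7]
  calc |a| ^ (-(1 : ℝ) / 2) * (|a| * |∫ y : ℝ, (f (a * y + b) - f b) * ψ y|)
      ≤ |a| ^ (-(1 : ℝ) / 2) * (|a| * (C * |a| ^ α * I)) := by
        have h8 : 0 ≤ |a| ^ (-(1 : ℝ) / 2) := Real.rpow_nonneg (abs_nonneg _) _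
        exact mul_le_mul_of_nonneg_left
          (mul_le_mul_of_nonneg_left hbound (abs_nonneg _)) h8
    _ = C * I * |a| ^ (α + 1 / 2) := by
        rw [show |a| * (C * |a| ^ α * I) = C * I * (|a| ^ (1 : ℝ) * |a| ^ α) by
          rw [Real.rpow_one]; ring]
        rw [← Real.rpow_add hta, ← mul_assoc, mul_comm (|a| ^ (-(1 : ℝ) / 2)) (C * I),
          mul_assoc, ← Real.rpow_add hta]
        congr 1; ring
end

section
/- Let ψ : ℝ → ℝ be integrable, compactly supported, with ∫_ℝ ψ(x) dx = 0. Let 0 < α ≤ 1 and let f : ℝ → ℝ be bounded, measurable, and Hölder continuous with exponent α and constant C, i.e. |f(x + δ) − f(x)| ≤ C·|δ|^α for all x, δ ∈ ℝ. Then there exists a constant C′ ≥ 0 such that for every a ≠ 0 and every b ∈ ℝ, |⟨f, ψ^{a,b}⟩| = |∫_ℝ f(x)·|a|^{−1/2}·ψ((x − b)/a) dx| ≤ C′·|a|^{α + 1/2}. -/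
open MeasureTheory Real

/-! Since `ψ^{a,b}` has vanishing integral, `f` may be replaced by `f - f b` in the
coefficient. If `ψ` is supported in `[-R, R]`, then `ψ^{a,b}` is supported within `|a| R`
of `b`, where Hölder continuity gives `|f x - f b| ≤ C (|a| R)^α`,
while `∫ |ψ^{a,b}| = |a|^{1/2} ∫ |ψ|`. -/

theorem integral_comp_sub_div {E : Type*} [NormedAddCommGroup E] [NormedSpace ℝ E]
    (g : ℝ → E) (a b : ℝ) : ∫ x, g ((x - b) / a) = |a| • ∫ x, g x := by
  rw [integral_sub_right_eq_self (fun x ↦ g (x / a)) b, Measure.integral_comp_div g a]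

theorem abs_integral_mul_le_of_integral_eq_zero {X : Type*} [MeasurableSpace X]
    {μ : Measure X} {f φ : X → ℝ} {x₀ : X} {K : ℝ} (hf : AEStronglyMeasurable f μ)
    (hφ : Integrable φ μ) (hφ_zero : ∫ x, φ x ∂μ = 0)
    (hosc : ∀ x, φ x ≠ 0 → |f x - f x₀| ≤ K) :
    |∫ x, f x * φ x ∂μ| ≤ K * ∫ x, |φ x| ∂μ := by
  have hpt : ∀ x, |(f x - f x₀) * φ x| ≤ K * |φ x| := fun x ↦ by
    by_cases hx : φ x = 0
    · simp [hx]
    · rw [abs_mul]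
      exact mul_le_mul_of_nonneg_right (hosc x hx) (abs_nonneg _)
  have hint : Integrable (fun x ↦ (f x - f x₀) * φ x) μ :=
    (hφ.abs.const_mul K).mono' ((hf.sub aestronglyMeasurable_const).mul hφ.1)
      (ae_of_all _ hpt)
  have hcentre : ∫ x, f x * φ x ∂μ = ∫ x, (f x - f x₀) * φ x ∂μ := by
    simp_rw [show ∀ x, f x * φ x = (f x - f x₀) * φ x + f x₀ * φ x from fun x ↦ by ring]
    rw [integral_add hint (hφ.const_mul _), integral_const_mul, hφ_zero, mul_zero, add_zero]
  calc |∫ x, f x * φ x ∂μ| = |∫ x, (f x - f x₀) * φ x ∂μ| := by rw [hcentre]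
    _ ≤ ∫ x, |(f x - f x₀) * φ x| ∂μ := abs_integral_le_integral_abs
    _ ≤ ∫ x, K * |φ x| ∂μ := integral_mono hint.abs (hφ.abs.const_mul K) hpt
    _ = K * ∫ x, |φ x| ∂μ := integral_const_mul K _

section Holder

variable {f : ℝ → ℝ} {α C : ℝ}

theorem holder_const_nonneg (hf : ∀ x δ : ℝ, |f (x + δ) - f x| ≤ C * |δ| ^ α) :
    0 ≤ C := by
  simpa using (abs_nonneg _).trans (hf 0 1)

theorem abs_sub_le_of_holder (hf : ∀ x δ : ℝ, |f (x + δ) - f x| ≤ C * |δ| ^ α)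
    (hα : 0 ≤ α) {x y r : ℝ} (hxy : |x - y| ≤ r) : |f x - f y| ≤ C * r ^ α := by
  simpa using (hf y (x - y)).trans
    (mul_le_mul_of_nonneg_left (rpow_le_rpow (abs_nonneg _) hxy hα) (holder_const_nonneg hf))

end Holder

theorem abs_sub_le_of_comp_sub_div_ne_zero {ψ : ℝ → ℝ} {R : ℝ}
    (hR : tsupport ψ ⊆ Metric.closedBall 0 R) {a b x : ℝ} (ha : a ≠ 0)
    (hx : ψ ((x - b) / a) ≠ 0) : |x - b| ≤ |a| * R := by
  have h : |x - b| / |a| ≤ R := by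
    simpa [Real.dist_eq, abs_div] using hR (subset_tsupport ψ hx)
  exact (div_le_iff₀' (abs_pos.mpr ha)).1 h

theorem rpow_neg_half_mul_rpow_mul_self {t : ℝ} (ht : 0 < t) (α : ℝ) :
    t ^ (-(1 : ℝ) / 2) * t ^ α * t = t ^ (α + 1 / 2) := by
  rw [show α + 1 / 2 = -1 / 2 + α + 1 by ring, rpow_add ht, rpow_add ht, rpow_one]

theorem wavelet_coeff_decay_of_holder_compact_support_general
    (ψ f : ℝ → ℝ) (α C : ℝ)
    (hψ_int : Integrable ψ)
    (hψ_supp : HasCompactSupport ψ)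
    (hψ_zero : (∫ x : ℝ, ψ x) = 0)
    (hα_pos : 0 < α)
    (hf_meas : Measurable f)
    (hf_holder : ∀ x δ : ℝ, |f (x + δ) - f x| ≤ C * |δ| ^ α) :
    ∃ C' : ℝ, 0 ≤ C' ∧ ∀ a : ℝ, a ≠ 0 → ∀ b : ℝ,
      |∫ x : ℝ, f x * (|a| ^ (-(1 : ℝ) / 2) * ψ ((x - b) / a))| ≤
        C' * |a| ^ (α + 1 / 2) := by
  obtain ⟨R, hR_pos, hR⟩ := hψ_supp.isBounded.subset_closedBall_lt 0 0
  have hC := holder_const_nonneg hf_holder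
  refine ⟨C * R ^ α * ∫ x, |ψ x|, by positivity, fun a ha b ↦ ?_⟩
  have ha' : 0 < |a| := abs_pos.mpr ha
  have hmoment := abs_integral_mul_le_of_integral_eq_zero (x₀ := b) (K := C * (|a| * R) ^ α)
    hf_meas.aestronglyMeasurable ((hψ_int.comp_div ha).comp_sub_right b)
    (by rw [integral_comp_sub_div, hψ_zero, smul_zero])
    fun x hx ↦ abs_sub_le_of_holder hf_holder hα_pos.le
      (abs_sub_le_of_comp_sub_div_ne_zero hR ha hx)
  rw [integral_comp_sub_div (fun x ↦ |ψ x|), smul_eq_mul] at hmoment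
  calc |∫ x, f x * (|a| ^ (-(1 : ℝ) / 2) * ψ ((x - b) / a))|
      = |a| ^ (-(1 : ℝ) / 2) * |∫ x, f x * ψ ((x - b) / a)| := by
        simp_rw [mul_left_comm (f _)]
        rw [integral_const_mul, abs_mul, abs_of_pos (rpow_pos_of_pos ha' _)]
    _ ≤ |a| ^ (-(1 : ℝ) / 2) * (C * (|a| * R) ^ α * (|a| * ∫ x, |ψ x|)) := by gcongr
    _ = C * R ^ α * (∫ x, |ψ x|) * (|a| ^ (-(1 : ℝ) / 2) * |a| ^ α * |a|) := by
        rw [mul_rpow ha'.le hR_pos.le]; ring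
    _ = C * R ^ α * (∫ x, |ψ x|) * |a| ^ (α + 1 / 2) := by
        rw [rpow_neg_half_mul_rpow_mul_self ha']

/-- **Theorem 3.2** (compact support of wavelet base).
If `ψ` is integrable, compactly supported with `∫ ψ = 0`, and `f` is bounded, measurable
and Hölder continuous with exponent `α ∈ (0, 1]` and constant `C`, then there is `C' ≥ 0`
with `|⟨f, ψ^{a,b}⟩| ≤ C' · |a| ^ (α + 1/2)` for all `a ≠ 0`, `b`. -/
theorem wavelet_coeff_decay_of_holder_compact_support
    (ψ f : ℝ → ℝ) (α C : ℝ)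
    (hψ_int : Integrable ψ)
    (hψ_supp : HasCompactSupport ψ)
    (hψ_zero : (∫ x : ℝ, ψ x) = 0)
    (hα_pos : 0 < α) (hα_le : α ≤ 1)
    (hf_meas : Measurable f)
    (hf_bdd : ∃ B : ℝ, ∀ x : ℝ, |f x| ≤ B)
    (hf_holder : ∀ x δ : ℝ, |f (x + δ) - f x| ≤ C * |δ| ^ α) :
    ∃ C' : ℝ, 0 ≤ C' ∧ ∀ a : ℝ, a ≠ 0 → ∀ b : ℝ,
      |∫ x : ℝ, f x * (|a| ^ (-(1 : ℝ) / 2) * ψ ((x - b) / a))| ≤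
        C' * |a| ^ (α + 1 / 2) :=
  wavelet_coeff_decay_of_holder_compact_support_general ψ f α C hψ_int hψ_supp hψ_zero hα_pos
    hf_meas hf_holder
end

section
/- Let ψ : ℝ → ℝ be measurable with ∫_ℝ (1 + |x|)·|ψ(x)| dx < ∞ and ∫_ℝ ψ(x) dx = 0. Let 0 < α ≤ 1, let x₀ ∈ ℝ, and let f : ℝ → ℝ be bounded and measurable with |f(x₀ + δ) − f(x₀)| ≤ C·|δ|^α for all δ ∈ ℝ (Hölder continuity of f at the single point x₀). Then there exists a constant C′ ≥ 0 such that for every a ≠ 0 and every b ∈ ℝ, |∫_ℝ f(x)·|a|^{−1/2}·ψ((x − (x₀ + b))/a) dx| ≤ C′·|a|^{1/2}·(|a|^α + |b|^α). -/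
open MeasureTheory Real

/-!
Substituting `x = x₀ + b + a t` turns the coefficient into `|a|^(1/2) ∫ f(x₀ + b + a t) ψ(t) dt`.
Since `ψ` has vanishing mean, `f(x₀ + b + a t)` may be replaced by `f(x₀ + b + a t) - f(x₀)`,
which the pointwise Hölder bound and the subadditivity of `s ↦ s^α` control by
`C (|a|^α + |b|^α) (1 + |t|)`; the first moment of `|ψ|` absorbs the factor `1 + |t|`.
-/

lemma rpow_le_one_add_self {t α : ℝ} (ht : 0 ≤ t) (hα₀ : 0 ≤ α) (hα₁ : α ≤ 1) :
    t ^ α ≤ 1 + t :=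
  (rpow_le_rpow ht (by linarith) hα₀).trans (rpow_le_self_of_one_le (by linarith) hα₁)

section HolderAt

variable {f : ℝ → ℝ} {x₀ C α : ℝ}

lemma nonneg_of_holderAt (hf : ∀ δ : ℝ, |f (x₀ + δ) - f x₀| ≤ C * |δ| ^ α) : 0 ≤ C := by
  simpa using (abs_nonneg _).trans (hf 1)

lemma abs_sub_le_of_holderAt (hα₀ : 0 ≤ α) (hα₁ : α ≤ 1)
    (hf : ∀ δ : ℝ, |f (x₀ + δ) - f x₀| ≤ C * |δ| ^ α) (a b t : ℝ) :
    |f (x₀ + b + a * t) - f x₀| ≤ C * (|a| ^ α + |b| ^ α) * (1 + |t|) := by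
  have hC := nonneg_of_holderAt hf
  have ht : |t| ^ α ≤ 1 + |t| := rpow_le_one_add_self (abs_nonneg t) hα₀ hα₁
  have h1t : 1 ≤ 1 + |t| := le_add_of_nonneg_right (abs_nonneg t)
  have hδ : |b + a * t| ^ α ≤ |a| ^ α * |t| ^ α + |b| ^ α :=
    calc |b + a * t| ^ α ≤ (|b| + |a * t|) ^ α :=
          rpow_le_rpow (abs_nonneg _) (abs_add_le _ _) hα₀
      _ ≤ |b| ^ α + |a * t| ^ α :=
          rpow_add_le_add_rpow (abs_nonneg _) (abs_nonneg _) hα₀ hα₁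
      _ = |a| ^ α * |t| ^ α + |b| ^ α := by
          rw [abs_mul, mul_rpow (abs_nonneg a) (abs_nonneg t), add_comm]
  calc |f (x₀ + b + a * t) - f x₀| ≤ C * |b + a * t| ^ α := by
        simpa only [add_assoc] using hf (b + a * t)
    _ ≤ C * (|a| ^ α * (1 + |t|) + |b| ^ α * (1 + |t|)) := by
        gcongr
        exact hδ.trans (add_le_add (by gcongr) (le_mul_of_one_le_right (by positivity) h1t))
    _ = C * (|a| ^ α + |b| ^ α) * (1 + |t|) := by ring

end HolderAt

section FirstMoment

variable {g ψ : ℝ → ℝ} {K : ℝ}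

lemma integrable_mul_of_abs_le_one_add_abs (hg : AEStronglyMeasurable g)
    (hψ : Measurable ψ) (hψ_int : Integrable (fun t : ℝ => (1 + |t|) * |ψ t|))
    (hgK : ∀ t, |g t| ≤ K * (1 + |t|)) :
    Integrable (fun t => g t * ψ t) := by
  refine (hψ_int.const_mul K).mono' (hg.mul hψ.aestronglyMeasurable) (ae_of_all _ fun t => ?_)
  rw [Real.norm_eq_abs, abs_mul, ← mul_assoc]
  exact mul_le_mul_of_nonneg_right (hgK t) (abs_nonneg _)

lemma abs_integral_mul_le_of_abs_le_one_add_abs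
    (hψ_int : Integrable (fun t : ℝ => (1 + |t|) * |ψ t|)) (hgK : ∀ t, |g t| ≤ K * (1 + |t|)) :
    |∫ t, g t * ψ t| ≤ K * ∫ t, (1 + |t|) * |ψ t| := by
  rw [← integral_const_mul, ← Real.norm_eq_abs]
  refine norm_integral_le_of_norm_le (hψ_int.const_mul K) (ae_of_all _ fun t => ?_)
  rw [Real.norm_eq_abs, abs_mul, ← mul_assoc]
  exact mul_le_mul_of_nonneg_right (hgK t) (abs_nonneg _)

lemma integrable_of_integrable_one_add_abs_mul
    (hψ : Measurable ψ) (hψ_int : Integrable (fun t : ℝ => (1 + |t|) * |ψ t|)) :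
    Integrable ψ :=
  hψ_int.mono' hψ.aestronglyMeasurable (ae_of_all _ fun t => by
    rw [Real.norm_eq_abs]
    exact le_mul_of_one_le_left (abs_nonneg _) (le_add_of_nonneg_right (abs_nonneg t)))

end FirstMoment

lemma integral_mul_eq_integral_sub_mul_of_integral_eq_zero {g ψ : ℝ → ℝ} (y : ℝ)
    (hψ : Integrable ψ) (hψ_zero : ∫ t, ψ t = 0) (hg : Integrable (fun t => (g t - y) * ψ t)) :
    ∫ t, g t * ψ t = ∫ t, (g t - y) * ψ t := by
  have hsplit : (fun t => g t * ψ t) = fun t => (g t - y) * ψ t + y * ψ t := by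
    funext t; ring
  rw [hsplit, integral_add hg (hψ.const_mul y), integral_const_mul, hψ_zero, mul_zero, add_zero]

lemma integral_mul_wavelet_eq (f ψ : ℝ → ℝ) {a : ℝ} (ha : a ≠ 0) (c : ℝ) :
    ∫ x, f x * (|a| ^ (-(1 : ℝ) / 2) * ψ ((x - c) / a)) =
      |a| ^ ((1 : ℝ) / 2) * ∫ t, f (c + a * t) * ψ t := by
  have hsubst : ∫ x, f x * ψ ((x - c) / a) = |a| * ∫ t, f (c + a * t) * ψ t := by
    have hcomp : (fun x => f x * ψ ((x - c) / a)) =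
        fun x => (fun y => f (c + a * (y / a)) * ψ (y / a)) (x - c) := by
      funext x; field_simp; ring_nf
    rw [hcomp, integral_sub_right_eq_self (fun y => f (c + a * (y / a)) * ψ (y / a)) c,
      Measure.integral_comp_div (fun t => f (c + a * t) * ψ t) a, smul_eq_mul]
  have hpow : |a| ^ (-(1 : ℝ) / 2) * |a| = |a| ^ ((1 : ℝ) / 2) := by
    rw [← rpow_add_one (abs_pos.mpr ha).ne']; norm_num
  simp_rw [mul_left_comm (f _)]
  rw [integral_const_mul, hsubst, ← mul_assoc, hpow]

theorem wavelet_coeff_local_regularity_general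
    (ψ f : ℝ → ℝ) (α C x₀ : ℝ)
    (hψ_meas : Measurable ψ)
    (hψ_int : Integrable (fun x : ℝ => (1 + |x|) * |ψ x|))
    (hψ_zero : (∫ x : ℝ, ψ x) = 0)
    (hα_pos : 0 < α) (hα_le : α ≤ 1)
    (hf_meas : Measurable f)
    (hf_holder_at : ∀ δ : ℝ, |f (x₀ + δ) - f x₀| ≤ C * |δ| ^ α) :
    ∃ C' : ℝ, 0 ≤ C' ∧ ∀ a : ℝ, a ≠ 0 → ∀ b : ℝ,
      |∫ x : ℝ, f x * (|a| ^ (-(1 : ℝ) / 2) * ψ ((x - (x₀ + b)) / a))| ≤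
        C' * |a| ^ ((1 : ℝ) / 2) * (|a| ^ α + |b| ^ α) := by
  have hC := nonneg_of_holderAt hf_holder_at
  have hI : 0 ≤ ∫ t, (1 + |t|) * |ψ t| := integral_nonneg fun t => by positivity
  refine ⟨C * ∫ t, (1 + |t|) * |ψ t|, by positivity, fun a ha b => ?_⟩
  have hgrowth := abs_sub_le_of_holderAt hα_pos.le hα_le hf_holder_at a b
  have hg_meas : AEStronglyMeasurable fun t => f (x₀ + b + a * t) - f x₀ :=
    (hf_meas.comp (measurable_const.add (measurable_const_mul a))).sub_const _
      |>.aestronglyMeasurable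
  rw [integral_mul_wavelet_eq f ψ ha, integral_mul_eq_integral_sub_mul_of_integral_eq_zero (f x₀)
    (integrable_of_integrable_one_add_abs_mul hψ_meas hψ_int) hψ_zero
    (integrable_mul_of_abs_le_one_add_abs hg_meas hψ_meas hψ_int hgrowth), abs_mul,
    abs_of_nonneg (by positivity)]
  calc |a| ^ ((1 : ℝ) / 2) * |∫ t, (f (x₀ + b + a * t) - f x₀) * ψ t|
      ≤ |a| ^ ((1 : ℝ) / 2) * (C * (|a| ^ α + |b| ^ α) * ∫ t, (1 + |t|) * |ψ t|) := by
        gcongr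
        exact abs_integral_mul_le_of_abs_le_one_add_abs hψ_int hgrowth
    _ = (C * ∫ t, (1 + |t|) * |ψ t|) * |a| ^ ((1 : ℝ) / 2) * (|a| ^ α + |b| ^ α) := by ring

/-- **Theorem 3.3** (local regularity of the wavelet transform).
If `ψ` is measurable with `∫ (1 + |x|)·|ψ x| < ∞` and `∫ ψ = 0`, and `f` is bounded,
measurable and Hölder continuous at the single point `x₀` with exponent `α ∈ (0, 1]` and
constant `C`, then there is `C' ≥ 0` such that
`|⟨f, ψ^{a, x₀ + b}⟩| ≤ C' · |a|^(1/2) · (|a|^α + |b|^α)` for all `a ≠ 0`, `b`. -/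
theorem wavelet_coeff_local_regularity
    (ψ f : ℝ → ℝ) (α C x₀ : ℝ)
    (hψ_meas : Measurable ψ)
    (hψ_int : Integrable (fun x : ℝ => (1 + |x|) * |ψ x|))
    (hψ_zero : (∫ x : ℝ, ψ x) = 0)
    (hα_pos : 0 < α) (hα_le : α ≤ 1)
    (hf_meas : Measurable f)
    (hf_bdd : ∃ B : ℝ, ∀ x : ℝ, |f x| ≤ B)
    (hf_holder_at : ∀ δ : ℝ, |f (x₀ + δ) - f x₀| ≤ C * |δ| ^ α) :
    ∃ C' : ℝ, 0 ≤ C' ∧ ∀ a : ℝ, a ≠ 0 → ∀ b : ℝ,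
      |∫ x : ℝ, f x * (|a| ^ (-(1 : ℝ) / 2) * ψ ((x - (x₀ + b)) / a))| ≤
        C' * |a| ^ ((1 : ℝ) / 2) * (|a| ^ α + |b| ^ α) :=
  wavelet_coeff_local_regularity_general ψ f α C x₀ hψ_meas hψ_int hψ_zero hα_pos hα_le hf_meas
    hf_holder_at
end

section
/- Let f, ψ : ℝ → ℝ be square-integrable and let ψ₂ : ℝ → ℝ be integrable. Define W(a, b) = ∫_ℝ f(y)·|a|^{−1/2}·ψ((y − b)/a) dy for a ≠ 0, b ∈ ℝ. Then for every x ∈ ℝ, the large-scale part of the reconstruction integral is uniformly bounded: ∫_{|a| ≥ 1} ∫_ℝ a^{−2}·|W(a, b)|·|a|^{−1/2}·|ψ₂((x − b)/a)| db da ≤ 4·‖f‖_{L²}·‖ψ‖_{L²}·‖ψ₂‖_{L¹}. -/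
/-!
By Cauchy–Schwarz, and because the normalization `|a|^{-1/2}` makes `ψ^{a,b}` an isometric copy
of `ψ` in `L²`, `|W(a, b)| ≤ ‖f‖₂ ‖ψ‖₂` uniformly in `(a, b)`. The substitution
`y = (x - b) / a` turns the `b`-integral of `|ψ₂((x - b)/a)|` into `|a| ‖ψ₂‖₁`, so the slice at
scale `a` is at most `‖f‖₂ ‖ψ‖₂ ‖ψ₂‖₁ |a|^{-3/2}`, and `∫_{|a| ≥ 1} |a|^{-3/2} da = 4`.
-/

open MeasureTheory Real Set
open scoped ENNReal

lemma abs_integral_mul_le_eLpNorm_mul_eLpNorm {α : Type*} [MeasurableSpace α] {μ : Measure α}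
    {f g : α → ℝ} (hf : MemLp f 2 μ) (hg : MemLp g 2 μ) :
    |∫ x, f x * g x ∂μ| ≤ (eLpNorm f 2 μ).toReal * (eLpNorm g 2 μ).toReal := by
  have hinner : inner ℝ (hf.toLp f) (hg.toLp g) = ∫ x, f x * g x ∂μ := by
    rw [L2.inner_def]
    refine integral_congr_ae ?_
    filter_upwards [hf.coeFn_toLp, hg.coeFn_toLp] with x hfx hgx
    simp [hfx, hgx, mul_comm]
  rw [← hinner, ← Lp.norm_toLp f hf, ← Lp.norm_toLp g hg]
  exact abs_real_inner_le_norm _ _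

section Affine

variable {E : Type*} [NormedAddCommGroup E] {a : ℝ}

lemma measurableEmbedding_sub_div (ha : a ≠ 0) (b : ℝ) :
    MeasurableEmbedding fun y : ℝ => (y - b) / a :=
  ((Homeomorph.subRight b).trans (Homeomorph.mulRight₀ a⁻¹ (inv_ne_zero ha))).measurableEmbedding

lemma map_volume_sub_div (ha : a ≠ 0) (b : ℝ) :
    Measure.map (fun y : ℝ => (y - b) / a) volume = ENNReal.ofReal |a| • volume := by
  have hcomp : (fun y : ℝ => (y - b) / a) = (· * a⁻¹) ∘ (· - b) := by
    funext y; simp [div_eq_mul_inv]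
  rw [hcomp, ← Measure.map_map (measurable_mul_const _) (measurable_sub_const b),
    map_sub_right_eq_self, Real.map_volume_mul_right (inv_ne_zero ha), inv_inv]

lemma eLpNorm_comp_sub_div (ψ : ℝ → E) {p : ℝ≥0∞} (hp : p ≠ ∞) (ha : a ≠ 0) (b : ℝ) :
    eLpNorm (fun y => ψ ((y - b) / a)) p volume =
      ENNReal.ofReal |a| ^ p.toReal⁻¹ * eLpNorm ψ p volume := by
  have hmap := (measurableEmbedding_sub_div ha b).eLpNorm_map_measure (g := ψ) (p := p)
    (μ := volume)
  rw [map_volume_sub_div ha b, eLpNorm_smul_measure_of_ne_top hp, one_div, ENNReal.toReal_inv,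
    smul_eq_mul] at hmap
  exact hmap.symm

lemma MeasureTheory.MemLp.comp_sub_div {ψ : ℝ → E} {p : ℝ≥0∞} (hψ : MemLp ψ p volume)
    (ha : a ≠ 0) (b : ℝ) :
    MemLp (fun y => ψ ((y - b) / a)) p volume := by
  have hsmul := hψ.smul_measure (c := ENNReal.ofReal |a|) ENNReal.ofReal_ne_top
  rwa [← map_volume_sub_div ha b, (measurableEmbedding_sub_div ha b).memLp_map_measure_iff]
    at hsmul

lemma integral_comp_sub_left_div [NormedSpace ℝ E] (g : ℝ → E) (x : ℝ) :
    ∫ b, g ((x - b) / a) = |a| • ∫ y, g y := by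
  rw [integral_sub_left_eq_self (fun t => g (t / a)) volume x, Measure.integral_comp_div]

end Affine

/-- The wavelet `ψ^{a,b}` of the paper. -/
noncomputable def dilateTranslate (ψ : ℝ → ℝ) (a b y : ℝ) : ℝ :=
  |a| ^ (-(1 : ℝ) / 2) * ψ ((y - b) / a)

section Wavelet

variable {ψ : ℝ → ℝ} {a : ℝ}

lemma MeasureTheory.MemLp.dilateTranslate (hψ : MemLp ψ 2 volume) (ha : a ≠ 0) (b : ℝ) :
    MemLp (dilateTranslate ψ a b) 2 volume :=
  (hψ.comp_sub_div ha b).const_mul _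

lemma eLpNorm_dilateTranslate (ψ : ℝ → ℝ) (ha : a ≠ 0) (b : ℝ) :
    eLpNorm (dilateTranslate ψ a b) 2 volume = eLpNorm ψ 2 volume := by
  have hpos : 0 < |a| := abs_pos.mpr ha
  have hcoef : ‖|a| ^ (-(1 : ℝ) / 2)‖ₑ = ENNReal.ofReal |a| ^ (-(1 : ℝ) / 2) := by
    rw [Real.enorm_eq_ofReal (by positivity), ENNReal.ofReal_rpow_of_pos hpos]
  have hne : ENNReal.ofReal |a| ≠ 0 := by simpa using hpos
  change eLpNorm (|a| ^ (-(1 : ℝ) / 2) • fun y => ψ ((y - b) / a)) 2 volume = _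
  rw [eLpNorm_const_smul, eLpNorm_comp_sub_div ψ ENNReal.ofNat_ne_top ha b, ← mul_assoc, hcoef,
    ← ENNReal.rpow_add _ _ hne ENNReal.ofReal_ne_top]
  norm_num

lemma abs_integral_mul_dilateTranslate_le {f : ℝ → ℝ} (hf : MemLp f 2 volume)
    (hψ : MemLp ψ 2 volume) (ha : a ≠ 0) (b : ℝ) :
    |∫ y, f y * dilateTranslate ψ a b y| ≤
      (eLpNorm f 2 volume).toReal * (eLpNorm ψ 2 volume).toReal := by
  simpa only [eLpNorm_dilateTranslate ψ ha b] using
    abs_integral_mul_le_eLpNorm_mul_eLpNorm hf (hψ.dilateTranslate ha b)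

end Wavelet

lemma setIntegral_one_le_abs_rpow {r : ℝ} (hr : r < -1) :
    ∫ a in {a : ℝ | 1 ≤ |a|}, |a| ^ r = -2 / (r + 1) := by
  have hind : {a : ℝ | 1 ≤ |a|}.indicator (fun a => |a| ^ r) =
      fun a => (Ici 1).indicator (fun t => t ^ r) |a| := by
    funext a; simp [indicator]
  rw [← integral_indicator (measurableSet_le measurable_const measurable_abs), hind,
    integral_comp_abs, setIntegral_indicator measurableSet_Ici,
    inter_eq_right.mpr (Ici_subset_Ioi.mpr one_pos), integral_Ici_eq_integral_Ioi,
    integral_Ioi_rpow_of_lt hr one_pos, one_rpow]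
  ring

lemma integrableOn_one_le_abs_rpow {r : ℝ} (hr : r < -1) :
    IntegrableOn (fun a : ℝ => |a| ^ r) {a : ℝ | 1 ≤ |a|} := by
  -- the Bochner integral of a non-integrable function is `0`
  refine Integrable.of_integral_ne_zero ?_
  rw [setIntegral_one_le_abs_rpow hr]
  exact div_ne_zero (by norm_num) (by linarith)

lemma integral_inv_sq_mul_abs_mul_comp_sub_div_le {w g : ℝ → ℝ} {C : ℝ} (hw : ∀ b, |w b| ≤ C)
    (hg : Integrable g) {a : ℝ} (ha : a ≠ 0) (x : ℝ) :
    ∫ b, (a ^ 2)⁻¹ * |w b| * (|a| ^ (-(1 : ℝ) / 2) * |g ((x - b) / a)|) ≤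
      C * (∫ y, |g y|) * |a| ^ (-(3 : ℝ) / 2) := by
  have hpos : 0 < |a| := abs_pos.mpr ha
  have hscale : (a ^ 2)⁻¹ * |a| ^ (-(1 : ℝ) / 2) * |a| = |a| ^ (-(3 : ℝ) / 2) := by
    rw [← sq_abs, ← rpow_two, ← rpow_neg hpos.le, ← rpow_add hpos, ← rpow_add_one hpos.ne']
    norm_num
  calc ∫ b, (a ^ 2)⁻¹ * |w b| * (|a| ^ (-(1 : ℝ) / 2) * |g ((x - b) / a)|)
      ≤ ∫ b, (a ^ 2)⁻¹ * C * (|a| ^ (-(1 : ℝ) / 2) * |g ((x - b) / a)|) := by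
        refine integral_mono_of_nonneg (.of_forall fun b => by positivity)
          ((((hg.abs.comp_div ha).comp_sub_left x).const_mul _).const_mul _)
          (.of_forall fun b => ?_)
        beta_reduce
        gcongr
        exact hw b
    _ = C * (∫ y, |g y|) * |a| ^ (-(3 : ℝ) / 2) := by
        rw [integral_const_mul, integral_const_mul,
          integral_comp_sub_left_div (fun y => |g y|), smul_eq_mul, ← hscale]
        ring

/-- Eq. (19) in the appendix proof of Theorem 3.2: the large-scale part (`|a| ≥ 1`) of the
wavelet reconstruction integral is uniformly bounded by `4 · ‖f‖₂ · ‖ψ‖₂ · ‖ψ₂‖₁`. -/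
theorem large_scale_reconstruction_bounded
    (f ψ ψ₂ : ℝ → ℝ) (W : ℝ → ℝ → ℝ)
    (hf_L2 : MemLp f 2 (volume : Measure ℝ))
    (hψ_L2 : MemLp ψ 2 (volume : Measure ℝ))
    (hψ₂_L1 : Integrable ψ₂)
    (hW : ∀ a : ℝ, a ≠ 0 → ∀ b : ℝ,
      W a b = ∫ y : ℝ, f y * (|a| ^ (-(1 : ℝ) / 2) * ψ ((y - b) / a))) :
    ∀ x : ℝ,
      (∫ a in {a : ℝ | 1 ≤ |a|},
          ∫ b : ℝ, (a ^ 2)⁻¹ * |W a b| * (|a| ^ (-(1 : ℝ) / 2) * |ψ₂ ((x - b) / a)|)) ≤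
        4 * (eLpNorm f 2 (volume : Measure ℝ)).toReal *
          (eLpNorm ψ 2 (volume : Measure ℝ)).toReal *
          (eLpNorm ψ₂ 1 (volume : Measure ℝ)).toReal := by
  intro x
  have hW_le : ∀ a, a ≠ 0 → ∀ b, |W a b| ≤
      (eLpNorm f 2 volume).toReal * (eLpNorm ψ 2 volume).toReal := fun a ha b => by
    rw [hW a ha b]
    exact abs_integral_mul_dilateTranslate_le hf_L2 hψ_L2 ha b
  have hψ₂_norm : (eLpNorm ψ₂ 1 volume).toReal = ∫ y, |ψ₂ y| := by
    rw [toReal_eLpNorm hψ₂_L1.aestronglyMeasurable,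
      lpNorm_one_eq_integral_norm hψ₂_L1.aestronglyMeasurable]
    rfl
  have hr : -(3 : ℝ) / 2 < -1 := by norm_num
  calc _ ≤ ∫ a in {a : ℝ | 1 ≤ |a|}, (eLpNorm f 2 volume).toReal * (eLpNorm ψ 2 volume).toReal *
          (∫ y, |ψ₂ y|) * |a| ^ (-(3 : ℝ) / 2) := by
        refine integral_mono_of_nonneg (.of_forall fun a => integral_nonneg fun b => by positivity)
          ((integrableOn_one_le_abs_rpow hr).const_mul _) ?_
        filter_upwards [ae_restrict_mem (measurableSet_le measurable_const measurable_abs)]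
          with a ha
        have ha₀ : a ≠ 0 := abs_pos.mp (one_pos.trans_le ha)
        exact integral_inv_sq_mul_abs_mul_comp_sub_div_le (hW_le a ha₀) hψ₂_L1 ha₀ x
    _ = _ := by
        rw [integral_const_mul, setIntegral_one_le_abs_rpow hr, hψ₂_norm]
        ring
end

section
/- Let R > 0. Let f : ℝ → ℝ be square-integrable, let ψ : ℝ → ℝ be square-integrable with support contained in [−R, R], and let ψ₂ : ℝ → ℝ be K-Lipschitz with support contained in [−R, R]. Define W(a, b) = ∫_ℝ f(y)·|a|^{−1/2}·ψ((y − b)/a) dy and the large-scale part f_L(x) = ∫_{|a| ≥ 1} ∫_ℝ a^{−2}·W(a, b)·|a|^{−1/2}·ψ₂((x − b)/a) db da. Then there exists a constant C‴ ≥ 0 such that |f_L(x + δ) − f_L(x)| ≤ C‴·|δ| for every x ∈ ℝ and every δ with |δ| ≤ 1. -/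
/-!
Cauchy–Schwarz, together with the fact that `ψ ↦ ψ^{a,b}` preserves the `L²` norm, bounds `W`
uniformly by `‖f‖₂ ‖ψ‖₂`. At a fixed scale `a` the inner integral is `|a|^{-5/2}` times the
convolution of the bounded function `W(a, ·)` with `ψ₂(·/a)`, which is `K/|a|`-Lipschitz and
supported in `[-R|a|, R|a|]`. For `|δ| ≤ 1 ≤ |a|` the increment of that convolution is supported in
an interval of length `2(R+1)|a|`, so it is at most `2(R+1) ‖f‖₂ ‖ψ‖₂ K |δ|`, independently of `a`;
integrating `|a|^{-5/2}` over `|a| ≥ 1` gives the Lipschitz constant.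
-/

open MeasureTheory Real Set Function

theorem abs_integral_mul_le_sqrt_mul_sqrt {α : Type*} [MeasurableSpace α] {μ : Measure α}
    {u v : α → ℝ} (hu : MemLp u 2 μ) (hv : MemLp v 2 μ) :
    |∫ y, u y * v y ∂μ| ≤ √(∫ y, u y ^ 2 ∂μ) * √(∫ y, v y ^ 2 ∂μ) := by
  have two : ENNReal.ofReal 2 = 2 := by norm_num
  have h := integral_mul_norm_le_Lp_mul_Lq Real.HolderConjugate.two_two (two ▸ hu) (two ▸ hv)
  simp only [Real.norm_eq_abs, rpow_two, sq_abs, ← sqrt_eq_rpow] at h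
  exact abs_integral_le_integral_abs.trans_eq (by simp only [abs_mul]) |>.trans h

theorem quasiMeasurePreserving_sub_div {a : ℝ} (ha : a ≠ 0) (b : ℝ) :
    Measure.QuasiMeasurePreserving (fun y : ℝ => (y - b) / a) := by
  have hdiv : Measure.QuasiMeasurePreserving (fun y : ℝ => y / a) :=
    ⟨by fun_prop, by
      simp only [div_eq_mul_inv]
      rw [Real.map_volume_mul_right (inv_ne_zero ha)]
      exact Measure.smul_absolutelyContinuous⟩
  exact hdiv.comp (measurePreserving_sub_right volume b).quasiMeasurePreserving

theorem lipschitzWith_toNNReal_of_abs_sub_le {g : ℝ → ℝ} {K : ℝ}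
    (h : ∀ z t, |g (z + t) - g z| ≤ K * |t|) : LipschitzWith K.toNNReal g :=
  LipschitzWith.of_dist_le_mul fun p q => by
    simpa [Real.dist_eq] using
      (h q (p - q)).trans (mul_le_mul_of_nonneg_right (le_coe_toNNReal K) (abs_nonneg _))

theorem support_comp_div_subset {ψ : ℝ → ℝ} {R : ℝ} (hψ : support ψ ⊆ Icc (-R) R) {a : ℝ}
    (ha : a ≠ 0) : support (fun z => ψ (z / a)) ⊆ Icc (-(R * |a|)) (R * |a|) := by
  intro z hz
  have h := abs_le.2 (hψ hz)
  rw [abs_div, div_le_iff₀ (abs_pos.2 ha)] at h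
  exact abs_le.1 h

theorem lipschitzWith_comp_div {ψ : ℝ → ℝ} {L : NNReal} (hψ : LipschitzWith L ψ) (a : ℝ) :
    LipschitzWith (L * ‖a‖₊⁻¹) (fun z => ψ (z / a)) := by
  simpa [div_eq_inv_mul, Function.comp_def] using hψ.comp (lipschitzWith_smul a⁻¹)

theorem exists_abs_le_of_support_subset_Icc {k : ℝ → ℝ} {ρ : ℝ} (hk : Continuous k)
    (hk_supp : support k ⊆ Icc (-ρ) ρ) : ∃ B, ∀ z, |k z| ≤ B :=
  hk.bounded_above_of_compact_support <|
    HasCompactSupport.intro isCompact_Icc fun _ hz => notMem_support.1 fun h => hz (hk_supp h)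

theorem abs_integral_le_of_support_subset_closedBall {g : ℝ → ℝ} {C x r : ℝ} (hr : 0 ≤ r)
    (hg : ∀ b, |g b| ≤ C) (hsupp : support g ⊆ Metric.closedBall x r) :
    |∫ b, g b| ≤ C * (2 * r) := by
  rw [← setIntegral_eq_integral_of_forall_compl_eq_zero fun b hb => notMem_support.1
    fun h => hb (hsupp h)]
  have h := norm_setIntegral_le_of_norm_le_const (f := g)
    (measure_closedBall_lt_top (μ := volume) (x := x) (r := r)) fun b _ => hg b
  rwa [Measure.real, Real.volume_closedBall, ENNReal.toReal_ofReal (by positivity)] at h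

section Convolution

variable {w k : ℝ → ℝ} {M ρ : ℝ}

theorem support_mul_comp_sub_subset (hk : support k ⊆ Icc (-ρ) ρ) (x : ℝ) :
    support (fun b => w b * k (x - b)) ⊆ Metric.closedBall x ρ := by
  intro b hb
  rw [Metric.mem_closedBall, dist_comm, Real.dist_eq]
  exact abs_le.2 (hk (right_ne_zero_of_mul hb))

theorem integrable_mul_comp_sub (hw : AEStronglyMeasurable w) (hwM : ∀ b, |w b| ≤ M)
    (hk : Continuous k) (hk_supp : support k ⊆ Icc (-ρ) ρ) (x : ℝ) :
    Integrable fun b => w b * k (x - b) := by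
  obtain ⟨B, hB⟩ := exists_abs_le_of_support_subset_Icc hk hk_supp
  refine (integrableOn_iff_integrable_of_support_subset (support_mul_comp_sub_subset hk_supp x)).1
    (IntegrableOn.of_bound measure_closedBall_lt_top
      (hw.mul (hk.comp (continuous_sub_left x)).aestronglyMeasurable).restrict (M * B)
      (ae_of_all _ fun b => ?_))
  rw [norm_mul]
  exact mul_le_mul (hwM b) (hB _) (norm_nonneg _) ((abs_nonneg _).trans (hwM b))

theorem abs_integral_mul_comp_sub_le (hρ : 0 ≤ ρ) (hwM : ∀ b, |w b| ≤ M) {B : ℝ}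
    (hkB : ∀ z, |k z| ≤ B) (hk_supp : support k ⊆ Icc (-ρ) ρ) (x : ℝ) :
    |∫ b, w b * k (x - b)| ≤ M * B * (2 * ρ) :=
  abs_integral_le_of_support_subset_closedBall hρ
    (fun b => (abs_mul _ _).trans_le <|
      mul_le_mul (hwM b) (hkB _) (abs_nonneg _) ((abs_nonneg _).trans (hwM b)))
    (support_mul_comp_sub_subset hk_supp x)

theorem abs_integral_mul_comp_sub_sub_le (hρ : 0 ≤ ρ) (hw : AEStronglyMeasurable w)
    (hwM : ∀ b, |w b| ≤ M) {L : NNReal} (hk : LipschitzWith L k)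
    (hk_supp : support k ⊆ Icc (-ρ) ρ) (x δ : ℝ) :
    |(∫ b, w b * k (x + δ - b)) - ∫ b, w b * k (x - b)| ≤ M * (L * |δ|) * (2 * (ρ + |δ|)) := by
  rw [← integral_sub (integrable_mul_comp_sub hw hwM hk.continuous hk_supp (x + δ))
    (integrable_mul_comp_sub hw hwM hk.continuous hk_supp x)]
  refine abs_integral_le_of_support_subset_closedBall (x := x) (by positivity) (fun b => ?_) ?_
  · have hlip : |k (x + δ - b) - k (x - b)| ≤ L * |δ| := by
      simpa [Real.dist_eq] using hk.dist_le_mul (x + δ - b) (x - b)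
    rw [← mul_sub, abs_mul]
    exact mul_le_mul (hwM b) hlip (abs_nonneg _) ((abs_nonneg _).trans (hwM b))
  · refine (support_sub _ _).trans (union_subset ?_ ?_)
    · refine (support_mul_comp_sub_subset hk_supp (x + δ)).trans
        (Metric.closedBall_subset_closedBall' ?_)
      rw [Real.dist_eq, add_sub_cancel_left]
    · exact (support_mul_comp_sub_subset hk_supp x).trans
        (Metric.closedBall_subset_closedBall (le_add_of_nonneg_right (abs_nonneg δ)))

end Convolution

theorem integrableOn_abs_rpow_of_lt {r : ℝ} (hr : r < -1) :
    IntegrableOn (fun a : ℝ => |a| ^ r) {a | 1 ≤ |a|} := by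
  have hIci : IntegrableOn (fun a : ℝ => |a| ^ r) (Ici 1) :=
    (integrableOn_Ici_iff_integrableOn_Ioi (by simp)).2 <|
      (integrableOn_Ioi_rpow_of_lt hr one_pos).congr_fun
        (fun a ha => by rw [abs_of_pos (one_pos.trans ha)]) measurableSet_Ioi
  have hIic : IntegrableOn (fun a : ℝ => |a| ^ r) (Iic (-1)) := by
    simpa [Function.comp_def] using
      ((Measure.measurePreserving_neg volume).integrableOn_comp_preimage
        (Homeomorph.neg ℝ).measurableEmbedding).2 hIci
  have hS : {a : ℝ | 1 ≤ |a|} = Iic (-1) ∪ Ici 1 := by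
    ext a; simp only [mem_ofPred_eq, mem_union, mem_Iic, mem_Ici, le_abs']
  rw [hS]
  exact hIic.union hIci

noncomputable def wavelet (ψ : ℝ → ℝ) (a b x : ℝ) : ℝ := |a| ^ (-(1 : ℝ) / 2) * ψ ((x - b) / a)

noncomputable def waveletTransform (f ψ : ℝ → ℝ) (a b : ℝ) : ℝ := ∫ y, f y * wavelet ψ a b y

section Wavelet

variable {f f' ψ ψ' : ℝ → ℝ} {a : ℝ}

theorem wavelet_sq (ψ : ℝ → ℝ) (a b x : ℝ) :
    wavelet ψ a b x ^ 2 = |a|⁻¹ * ψ ((x - b) / a) ^ 2 := by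
  rw [wavelet, mul_pow, ← rpow_natCast, ← rpow_mul (abs_nonneg a)]
  norm_num [rpow_neg_one]

theorem integral_wavelet_sq (ψ : ℝ → ℝ) (ha : a ≠ 0) (b : ℝ) :
    ∫ y, wavelet ψ a b y ^ 2 = ∫ y, ψ y ^ 2 := by
  simp only [wavelet_sq]
  rw [integral_const_mul, integral_sub_right_eq_self (fun y => ψ (y / a) ^ 2) b,
    Measure.integral_comp_div (fun y => ψ y ^ 2), smul_eq_mul, inv_mul_cancel_left₀]
  exact abs_ne_zero.2 ha

theorem memLp_wavelet (hψ : MemLp ψ 2) (ha : a ≠ 0) (b : ℝ) : MemLp (wavelet ψ a b) 2 := by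
  refine (memLp_two_iff_integrable_sq ?_).2 ?_
  · exact aestronglyMeasurable_const.mul
      (hψ.1.comp_quasiMeasurePreserving (quasiMeasurePreserving_sub_div ha b))
  · simp only [wavelet_sq]
    exact ((hψ.integrable_sq.comp_div ha).comp_sub_right b).const_mul _

theorem abs_waveletTransform_le (hf : MemLp f 2) (hψ : MemLp ψ 2) (ha : a ≠ 0) (b : ℝ) :
    |waveletTransform f ψ a b| ≤ √(∫ y, f y ^ 2) * √(∫ y, ψ y ^ 2) := by
  simpa only [waveletTransform, integral_wavelet_sq ψ ha b] using
    abs_integral_mul_le_sqrt_mul_sqrt hf (memLp_wavelet hψ ha b)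

theorem waveletTransform_congr_ae (hf : f =ᵐ[volume] f') (hψ : ψ =ᵐ[volume] ψ') (ha : a ≠ 0)
    (b : ℝ) : waveletTransform f ψ a b = waveletTransform f' ψ' a b := by
  refine integral_congr_ae ?_
  filter_upwards [hf, (quasiMeasurePreserving_sub_div ha b).ae_eq_comp hψ] with y hfy hψy
  rw [wavelet, wavelet, hfy, show ψ ((y - b) / a) = ψ' ((y - b) / a) from hψy]

theorem stronglyMeasurable_uncurry_waveletTransform (hf : StronglyMeasurable f)
    (hψ : StronglyMeasurable ψ) : StronglyMeasurable (uncurry (waveletTransform f ψ)) := by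
  have hf := hf.measurable
  have hψ := hψ.measurable
  have h : Measurable fun q : (ℝ × ℝ) × ℝ => f q.2 * wavelet ψ q.1.1 q.1.2 q.2 := by
    unfold wavelet; fun_prop
  exact h.stronglyMeasurable.integral_prod_right'

-- `f` and `ψ` are only a.e. strongly measurable, so `W` need not be jointly measurable;
-- measurable representatives repair this without changing `W` off `a = 0`.
theorem exists_stronglyMeasurable_eq_waveletTransform (hf : AEStronglyMeasurable f volume)
    (hψ : AEStronglyMeasurable ψ volume) :
    ∃ V : ℝ → ℝ → ℝ, StronglyMeasurable (uncurry V) ∧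
      ∀ a ≠ 0, ∀ b, V a b = waveletTransform f ψ a b :=
  ⟨waveletTransform (hf.mk f) (hψ.mk ψ),
    stronglyMeasurable_uncurry_waveletTransform hf.stronglyMeasurable_mk hψ.stronglyMeasurable_mk,
    fun _ ha b => (waveletTransform_congr_ae hf.ae_eq_mk hψ.ae_eq_mk ha b).symm⟩

end Wavelet

noncomputable def largeScalePart (V : ℝ → ℝ → ℝ) (ψ : ℝ → ℝ) (x : ℝ) : ℝ :=
  ∫ a in {a : ℝ | 1 ≤ |a|}, ∫ b, (a ^ 2)⁻¹ * V a b * wavelet ψ a b x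

section LargeScalePart

variable {V V' : ℝ → ℝ → ℝ} {ψ : ℝ → ℝ} {M R : ℝ} {a : ℝ}

theorem measurableSet_one_le_abs : MeasurableSet {a : ℝ | 1 ≤ |a|} :=
  measurableSet_le measurable_const measurable_abs

theorem ne_zero_of_one_le_abs (ha : 1 ≤ |a|) : a ≠ 0 :=
  abs_pos.1 (one_pos.trans_le ha)

theorem largeScalePart_congr (h : ∀ a ≠ 0, ∀ b, V a b = V' a b) :
    largeScalePart V ψ = largeScalePart V' ψ := by
  funext x
  refine setIntegral_congr_fun measurableSet_one_le_abs fun a ha => ?_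
  simp only [h a (ne_zero_of_one_le_abs ha)]

theorem integral_inv_sq_mul_wavelet (v : ℝ → ℝ) (ψ : ℝ → ℝ) (ha : a ≠ 0) (x : ℝ) :
    ∫ b, (a ^ 2)⁻¹ * v b * wavelet ψ a b x =
      |a| ^ (-(5 : ℝ) / 2) * ∫ b, v b * ψ ((x - b) / a) := by
  have h : (a ^ 2)⁻¹ * |a| ^ (-(1 : ℝ) / 2) = |a| ^ (-(5 : ℝ) / 2) := by
    rw [← sq_abs, ← rpow_two, ← rpow_neg (abs_nonneg a), ← rpow_add (abs_pos.2 ha)]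
    norm_num
  rw [← h, ← integral_const_mul]
  congr 1 with b
  rw [wavelet]
  ring

theorem integrableOn_integral_inv_sq_mul_wavelet (hV : StronglyMeasurable (uncurry V))
    (hVM : ∀ a ≠ 0, ∀ b, |V a b| ≤ M) (hψ : Continuous ψ) (hψ_supp : support ψ ⊆ Icc (-R) R)
    (hR : 0 ≤ R) (x : ℝ) :
    IntegrableOn (fun a => ∫ b, (a ^ 2)⁻¹ * V a b * wavelet ψ a b x) {a | 1 ≤ |a|} := by
  obtain ⟨B, hB⟩ := exists_abs_le_of_support_subset_Icc hψ hψ_supp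
  have hmeas : StronglyMeasurable fun a => ∫ b, (a ^ 2)⁻¹ * V a b * wavelet ψ a b x := by
    have hV := hV.measurable
    have hψ := hψ.measurable
    have h : Measurable fun p : ℝ × ℝ => (p.1 ^ 2)⁻¹ * uncurry V p * wavelet ψ p.1 p.2 x := by
      unfold wavelet; fun_prop
    exact h.stronglyMeasurable.integral_prod_right'
  refine Integrable.mono' ((integrableOn_abs_rpow_of_lt (r := -(3 : ℝ) / 2) (by norm_num)).const_mul
    (M * B * (2 * R))) hmeas.aestronglyMeasurable.restrict
    ((ae_restrict_iff' measurableSet_one_le_abs).2 (ae_of_all _ fun a ha => ?_))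
  have ha0 := ne_zero_of_one_le_abs ha
  have h53 : |a| ^ (-(5 : ℝ) / 2) * |a| = |a| ^ (-(3 : ℝ) / 2) := by
    rw [← rpow_add_one (abs_pos.2 ha0).ne']
    norm_num
  rw [Real.norm_eq_abs, integral_inv_sq_mul_wavelet _ _ ha0, abs_mul, abs_of_nonneg (by positivity)]
  calc |a| ^ (-(5 : ℝ) / 2) * |∫ b, V a b * ψ ((x - b) / a)|
      ≤ |a| ^ (-(5 : ℝ) / 2) * (M * B * (2 * (R * |a|))) := by
        gcongr
        exact abs_integral_mul_comp_sub_le (by positivity) (hVM a ha0) (fun z => hB (z / a))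
          (support_comp_div_subset hψ_supp ha0) x
    _ = M * B * (2 * R) * |a| ^ (-(3 : ℝ) / 2) := by rw [← h53]; ring

theorem abs_integral_inv_sq_mul_wavelet_sub_le (hV : StronglyMeasurable (uncurry V))
    (hVM : ∀ a ≠ 0, ∀ b, |V a b| ≤ M) {L : NNReal} (hψ : LipschitzWith L ψ)
    (hψ_supp : support ψ ⊆ Icc (-R) R) (hR : 0 ≤ R) (ha : 1 ≤ |a|) {δ : ℝ} (hδ : |δ| ≤ 1)
    (x : ℝ) :
    |(∫ b, (a ^ 2)⁻¹ * V a b * wavelet ψ a b (x + δ)) - ∫ b, (a ^ 2)⁻¹ * V a b * wavelet ψ a b x|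
      ≤ 2 * (R + 1) * M * L * |δ| * |a| ^ (-(5 : ℝ) / 2) := by
  have ha0 := ne_zero_of_one_le_abs ha
  have hM : 0 ≤ M := (abs_nonneg _).trans (hVM a ha0 0)
  rw [integral_inv_sq_mul_wavelet _ _ ha0, integral_inv_sq_mul_wavelet _ _ ha0, ← mul_sub, abs_mul,
    abs_of_nonneg (by positivity), mul_comm]
  gcongr
  calc _ ≤ M * ((L * ‖a‖₊⁻¹ : NNReal) * |δ|) * (2 * (R * |a| + |δ|)) :=
        abs_integral_mul_comp_sub_sub_le (by positivity)
          (hV.comp_measurable measurable_prodMk_left).aestronglyMeasurable (hVM a ha0)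
          (lipschitzWith_comp_div hψ a) (support_comp_div_subset hψ_supp ha0) x δ
    _ ≤ M * (L * |a|⁻¹ * |δ|) * (2 * ((R + 1) * |a|)) := by
        rw [NNReal.coe_mul, NNReal.coe_inv, coe_nnnorm, Real.norm_eq_abs]
        gcongr
        linarith
    _ = 2 * (R + 1) * M * L * |δ| := by field_simp

theorem abs_largeScalePart_sub_le (hV : StronglyMeasurable (uncurry V))
    (hVM : ∀ a ≠ 0, ∀ b, |V a b| ≤ M) {L : NNReal} (hψ : LipschitzWith L ψ)
    (hψ_supp : support ψ ⊆ Icc (-R) R) (hR : 0 ≤ R) {δ : ℝ} (hδ : |δ| ≤ 1) (x : ℝ) :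
    |largeScalePart V ψ (x + δ) - largeScalePart V ψ x|
      ≤ 2 * (R + 1) * M * L * (∫ a in {a : ℝ | 1 ≤ |a|}, |a| ^ (-(5 : ℝ) / 2)) * |δ| := by
  have hint := integrableOn_integral_inv_sq_mul_wavelet hV hVM hψ.continuous hψ_supp hR
  rw [largeScalePart, largeScalePart, ← integral_sub (hint _) (hint _)]
  calc _ ≤ _ := abs_integral_le_integral_abs
    _ ≤ ∫ a in {a : ℝ | 1 ≤ |a|}, 2 * (R + 1) * M * L * |δ| * |a| ^ (-(5 : ℝ) / 2) :=
        setIntegral_mono_on ((hint _).sub (hint _)).abs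
          ((integrableOn_abs_rpow_of_lt (by norm_num)).const_mul _) measurableSet_one_le_abs
          fun a ha => abs_integral_inv_sq_mul_wavelet_sub_le hV hVM hψ hψ_supp hR ha hδ x
    _ = _ := by rw [integral_const_mul]; ring

end LargeScalePart

theorem large_scale_part_lipschitz_general
    (R K : ℝ) (hR : 0 < R)
    (f ψ ψ₂ : ℝ → ℝ) (W : ℝ → ℝ → ℝ) (fL : ℝ → ℝ)
    (hf_L2 : MemLp f 2 (volume : Measure ℝ))
    (hψ_L2 : MemLp ψ 2 (volume : Measure ℝ))
    (hψ₂_lip : ∀ z t : ℝ, |ψ₂ (z + t) - ψ₂ z| ≤ K * |t|)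
    (hψ₂_supp : Function.support ψ₂ ⊆ Set.Icc (-R) R)
    (hW : ∀ a : ℝ, a ≠ 0 → ∀ b : ℝ,
      W a b = ∫ y : ℝ, f y * (|a| ^ (-(1 : ℝ) / 2) * ψ ((y - b) / a)))
    (hfL : ∀ x : ℝ,
      fL x = ∫ a in {a : ℝ | 1 ≤ |a|},
               ∫ b : ℝ, (a ^ 2)⁻¹ * W a b * (|a| ^ (-(1 : ℝ) / 2) * ψ₂ ((x - b) / a))) :
    ∃ C''' : ℝ, 0 ≤ C''' ∧ ∀ x δ : ℝ, |δ| ≤ 1 →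
      |fL (x + δ) - fL x| ≤ C''' * |δ| := by
  obtain ⟨V, hV_meas, hV_eq⟩ := exists_stronglyMeasurable_eq_waveletTransform hf_L2.1 hψ_L2.1
  have hV_le : ∀ a ≠ 0, ∀ b, |V a b| ≤ √(∫ y, f y ^ 2) * √(∫ y, ψ y ^ 2) := fun a ha b =>
    hV_eq a ha b ▸ abs_waveletTransform_le hf_L2 hψ_L2 ha b
  have hfL_eq : fL = largeScalePart V ψ₂ := by
    rw [largeScalePart_congr fun a ha b => (hV_eq a ha b).trans (hW a ha b).symm]
    exact funext hfL
  refine ⟨_, by positivity, fun x δ hδ => hfL_eq ▸ abs_largeScalePart_sub_le hV_meas hV_le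
    (lipschitzWith_toNNReal_of_abs_sub_le hψ₂_lip) hψ₂_supp hR.le hδ x⟩

/-- Eqs. (20)–(21) in the appendix proof of Theorem 3.2: the large-scale part `f_L` of the
wavelet reconstruction of an `L²` function `f` (with compactly supported `L²` analysis
wavelet `ψ` and compactly supported Lipschitz reconstruction wavelet `ψ₂`) is Lipschitz:
`|f_L (x + δ) - f_L x| ≤ C''' · |δ|` for `|δ| ≤ 1`. -/
theorem large_scale_part_lipschitz
    (R K : ℝ) (hR : 0 < R)
    (f ψ ψ₂ : ℝ → ℝ) (W : ℝ → ℝ → ℝ) (fL : ℝ → ℝ)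
    (hf_L2 : MemLp f 2 (volume : Measure ℝ))
    (hψ_L2 : MemLp ψ 2 (volume : Measure ℝ))
    (hψ_supp : Function.support ψ ⊆ Set.Icc (-R) R)
    (hψ₂_lip : ∀ z t : ℝ, |ψ₂ (z + t) - ψ₂ z| ≤ K * |t|)
    (hψ₂_supp : Function.support ψ₂ ⊆ Set.Icc (-R) R)
    (hW : ∀ a : ℝ, a ≠ 0 → ∀ b : ℝ,
      W a b = ∫ y : ℝ, f y * (|a| ^ (-(1 : ℝ) / 2) * ψ ((y - b) / a)))
    (hfL : ∀ x : ℝ,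
      fL x = ∫ a in {a : ℝ | 1 ≤ |a|},
               ∫ b : ℝ, (a ^ 2)⁻¹ * W a b * (|a| ^ (-(1 : ℝ) / 2) * ψ₂ ((x - b) / a))) :
    ∃ C''' : ℝ, 0 ≤ C''' ∧ ∀ x δ : ℝ, |δ| ≤ 1 →
      |fL (x + δ) - fL x| ≤ C''' * |δ| :=
  large_scale_part_lipschitz_general R K hR f ψ ψ₂ W fL hf_L2 hψ_L2 hψ₂_lip hψ₂_supp hW hfL
end

section
/- Let R > 0, let ψ₂ : ℝ → ℝ be K-Lipschitz with support contained in [−R, R], let 0 < α < 1 and C ≥ 0, and let W be a measurable function on (ℝ \ {0}) × ℝ with |W(a, b)| ≤ C·|a|^{α + 1/2} for all a with 0 < |a| ≤ 1 and all b ∈ ℝ. Define the small-scale part f_S(x) = ∫_{0 < |a| ≤ 1} ∫_ℝ a^{−2}·W(a, b)·|a|^{−1/2}·ψ₂((x − b)/a) db da. Then there exists a constant C″ ≥ 0 such that |f_S(x + δ) − f_S(x)| ≤ C″·|δ|^α for every x ∈ ℝ and every δ with 0 < |δ| ≤ 1. -/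
/-!
Let `F x a = ∫ b, a⁻² W(a, b) |a|^(-1/2) ψ₂((x - b) / a)` be the contribution of scale `a`.
Its integrand is `O(|a|^(α - 2))` and vanishes off a `b`-interval of length `O(|a|)`, so
`F x a = O(|a|^(α - 1))`. Since `ψ₂` is Lipschitz, moving `x` by `δ` changes the integrand by
`O(|a|^(α - 2) · |δ| / |a|)` on an interval of length `O(|a|)` when `|δ| ≤ |a|`, so
`F (x + δ) a - F x a = O(|δ| |a|^(α - 2))`. Integrating the first bound over `|a| ≤ |δ|` and the
second over `|δ| < |a| ≤ 1` gives `O(|δ|^α)` in both cases, precisely because `0 < α < 1`.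
-/
open MeasureTheory Real Set Metric Function
open scoped Interval

section AbsPreimage

variable {f : ℝ → ℝ} {T : Set ℝ}

theorem setIntegral_abs_preimage (hT : MeasurableSet T) (hT₀ : T ⊆ Ioi 0) :
    ∫ a in abs ⁻¹' T, f |a| = 2 * ∫ t in T, f t := by
  have h : (abs ⁻¹' T).indicator (fun a => f |a|) = fun a => T.indicator f |a| :=
    funext fun _ => indicator_comp_right abs
  rw [← integral_indicator (measurable_abs hT), h, integral_comp_abs, setIntegral_indicator hT,
    inter_eq_right.mpr hT₀]

theorem IntegrableOn.comp_abs_preimage (hf : IntegrableOn f T) (hT : MeasurableSet T)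
    (hT₀ : T ⊆ Ioi 0) :
    IntegrableOn (fun a => f |a|) (abs ⁻¹' T) := by
  have hsplit : abs ⁻¹' T = T ∪ Neg.neg ⁻¹' T := by
    ext a
    have hpos : ∀ {t}, t ∈ T → 0 < t := fun ht => hT₀ ht
    rcases le_or_gt 0 a with ha | ha
    · simp only [mem_preimage, mem_union, abs_of_nonneg ha]
      exact ⟨Or.inl, fun h => h.elim id fun h' => absurd (hpos h') (by linarith)⟩
    · simp only [mem_preimage, mem_union, abs_of_neg ha]
      exact ⟨Or.inr, fun h => h.elim (fun h' => absurd (hpos h') (by linarith)) id⟩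
  have hneg : IntegrableOn (f ∘ Neg.neg) (Neg.neg ⁻¹' T) :=
    ((Measure.measurePreserving_neg volume).integrableOn_comp_preimage
      (Homeomorph.neg ℝ).measurableEmbedding).mpr hf
  rw [hsplit]
  refine .union (hf.congr_fun (fun a ha => ?_) hT)
    (hneg.congr_fun (fun a ha => ?_) (measurable_neg hT))
  · rw [abs_of_pos (hT₀ ha)]
  · rw [comp_apply, abs_of_neg (neg_pos.mp (hT₀ ha))]

end AbsPreimage

section RpowIntegrals

variable {r u v : ℝ}

theorem integrableOn_Ioc_rpow (h : -1 < r ∨ r ≠ -1 ∧ (0 : ℝ) ∉ [[u, v]]) (huv : u ≤ v) :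
    IntegrableOn (fun t => t ^ r) (Ioc u v) := by
  rw [← intervalIntegrable_iff_integrableOn_Ioc_of_le huv]
  rcases h with h | ⟨-, h⟩
  · exact intervalIntegral.intervalIntegrable_rpow' h
  · exact intervalIntegral.intervalIntegrable_rpow (Or.inr h)

theorem integral_Ioc_rpow (h : -1 < r ∨ r ≠ -1 ∧ (0 : ℝ) ∉ [[u, v]]) (huv : u ≤ v) :
    ∫ t in Ioc u v, t ^ r = (v ^ (r + 1) - u ^ (r + 1)) / (r + 1) := by
  rw [← intervalIntegral.integral_of_le huv, integral_rpow h]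

theorem setIntegral_abs_preimage_Ioc_le {G : ℝ → ℝ} {c : ℝ} (hu : 0 ≤ u) (huv : u ≤ v)
    (h : -1 < r ∨ r ≠ -1 ∧ (0 : ℝ) ∉ [[u, v]]) (hG : IntegrableOn G (abs ⁻¹' Ioc u v))
    (hle : ∀ a, |a| ∈ Ioc u v → G a ≤ c * |a| ^ r) :
    ∫ a in abs ⁻¹' Ioc u v, G a ≤ 2 * c * ((v ^ (r + 1) - u ^ (r + 1)) / (r + 1)) := by
  have hpos : Ioc u v ⊆ Ioi 0 := fun t ht => lt_of_le_of_lt hu ht.1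
  calc ∫ a in abs ⁻¹' Ioc u v, G a
      ≤ ∫ a in abs ⁻¹' Ioc u v, c * |a| ^ r :=
        setIntegral_mono_on hG (IntegrableOn.comp_abs_preimage
          ((integrableOn_Ioc_rpow h huv).const_mul c) measurableSet_Ioc hpos)
          (measurable_abs measurableSet_Ioc) hle
    _ = 2 * c * ((v ^ (r + 1) - u ^ (r + 1)) / (r + 1)) := by
        rw [setIntegral_abs_preimage (f := fun t => c * t ^ r) measurableSet_Ioc hpos,
          integral_const_mul, integral_Ioc_rpow h huv, mul_assoc]

end RpowIntegrals

section ScaleSplitting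

variable {α : ℝ}

theorem integrableOn_abs_preimage_of_abs_le_rpow {F : ℝ → ℝ} {A : ℝ} (hα : 0 < α)
    (hF : AEStronglyMeasurable F (volume.restrict (abs ⁻¹' Ioc 0 1)))
    (hle : ∀ a, |a| ∈ Ioc 0 1 → |F a| ≤ A * |a| ^ (α - 1)) :
    IntegrableOn F (abs ⁻¹' Ioc 0 1) := by
  have hdom : IntegrableOn (fun a => A * |a| ^ (α - 1)) (abs ⁻¹' Ioc 0 1) :=
    IntegrableOn.comp_abs_preimage
      ((integrableOn_Ioc_rpow (Or.inl (by linarith)) zero_le_one).const_mul A)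
      measurableSet_Ioc fun _ ht => ht.1
  refine hdom.mono' hF ?_
  filter_upwards [ae_restrict_mem (measurable_abs measurableSet_Ioc)] with a ha
  exact hle a ha

theorem abs_setIntegral_sub_le_of_scale_bounds {F₀ F₁ : ℝ → ℝ} {A B d : ℝ} (hα₀ : 0 < α)
    (hα₁ : α < 1) (hB : 0 ≤ B) (hd₀ : 0 < d) (hd₁ : d ≤ 1)
    (hF₀ : IntegrableOn F₀ (abs ⁻¹' Ioc 0 1)) (hF₁ : IntegrableOn F₁ (abs ⁻¹' Ioc 0 1))
    (hsmall : ∀ a, |a| ∈ Ioc 0 d → |F₁ a - F₀ a| ≤ A * |a| ^ (α - 1))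
    (hlarge : ∀ a, |a| ∈ Ioc d 1 → |F₁ a - F₀ a| ≤ B * d * |a| ^ (α - 2)) :
    |(∫ a in abs ⁻¹' Ioc 0 1, F₁ a) - ∫ a in abs ⁻¹' Ioc 0 1, F₀ a|
      ≤ (2 * A / α + 2 * B / (1 - α)) * d ^ α := by
  have hsplit : abs ⁻¹' Ioc (0 : ℝ) 1 = abs ⁻¹' Ioc 0 d ∪ abs ⁻¹' Ioc d 1 := by
    rw [← preimage_union, Ioc_union_Ioc_eq_Ioc hd₀.le hd₁]
  have hdisj : Disjoint (abs ⁻¹' Ioc (0 : ℝ) d) (abs ⁻¹' Ioc d 1) :=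
    (Ioc_disjoint_Ioc_of_le le_rfl).preimage abs
  have hint : IntegrableOn (fun a => |F₁ a - F₀ a|) (abs ⁻¹' Ioc 0 1) := (hF₁.sub hF₀).abs
  rw [hsplit] at hint
  have hsmall_int := setIntegral_abs_preimage_Ioc_le le_rfl hd₀.le (Or.inl (by linarith))
    (hint.mono_set subset_union_left) hsmall
  have hlarge_int := setIntegral_abs_preimage_Ioc_le hd₀.le hd₁
    (Or.inr ⟨by linarith, notMem_uIcc_of_lt hd₀ one_pos⟩) (hint.mono_set subset_union_right) hlarge
  rw [zero_rpow (by linarith), show α - 1 + 1 = α by ring] at hsmall_int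
  rw [one_rpow, show α - 2 + 1 = α - 1 by ring, rpow_sub_one hd₀.ne'] at hlarge_int
  calc |(∫ a in abs ⁻¹' Ioc 0 1, F₁ a) - ∫ a in abs ⁻¹' Ioc 0 1, F₀ a|
      = |∫ a in abs ⁻¹' Ioc 0 1, (F₁ a - F₀ a)| := by rw [integral_sub hF₁ hF₀]
    _ ≤ ∫ a in abs ⁻¹' Ioc 0 1, |F₁ a - F₀ a| := abs_integral_le_integral_abs
    _ = (∫ a in abs ⁻¹' Ioc 0 d, |F₁ a - F₀ a|) + ∫ a in abs ⁻¹' Ioc d 1, |F₁ a - F₀ a| := by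
        rw [hsplit, setIntegral_union hdisj (measurable_abs measurableSet_Ioc)
          (hint.mono_set subset_union_left) (hint.mono_set subset_union_right)]
    _ ≤ _ := add_le_add hsmall_int hlarge_int
    _ ≤ (2 * A / α + 2 * B / (1 - α)) * d ^ α := by
        have h1α : 0 < 1 - α := by linarith
        have hα1 : α - 1 ≠ 0 := by linarith
        have hlarge_le : 2 * (B * d) * ((1 - d ^ α / d) / (α - 1)) ≤ 2 * B / (1 - α) * d ^ α := by
          rw [show 2 * (B * d) * ((1 - d ^ α / d) / (α - 1)) = 2 * B / (1 - α) * (d ^ α - d) by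
            field_simp; ring]
          exact mul_le_mul_of_nonneg_left (by linarith) (by positivity)
        linarith [show 2 * A * ((d ^ α - 0) / α) = 2 * A / α * d ^ α by ring]

end ScaleSplitting

section LipschitzBump

variable {ψ : ℝ → ℝ} {K R : ℝ}

theorem nonneg_of_forall_abs_sub_le (hlip : ∀ z t, |ψ (z + t) - ψ z| ≤ K * |t|) : 0 ≤ K := by
  simpa using (abs_nonneg _).trans (hlip 0 1)

theorem lipschitzWith_of_forall_abs_sub_le (hlip : ∀ z t, |ψ (z + t) - ψ z| ≤ K * |t|) :
    LipschitzWith (Real.toNNReal K) ψ :=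
  LipschitzWith.of_dist_le_mul fun z w => by
    rw [Real.dist_eq, Real.dist_eq, Real.coe_toNNReal _ (nonneg_of_forall_abs_sub_le hlip)]
    simpa using hlip w (z - w)

theorem abs_le_of_forall_abs_sub_le_of_support_subset (hlip : ∀ z t, |ψ (z + t) - ψ z| ≤ K * |t|)
    (hsupp : support ψ ⊆ Icc (-R) R) (hR : 0 ≤ R) (z : ℝ) : |ψ z| ≤ K * (2 * R + 1) := by
  have hzero : ψ (z + (2 * R + 1)) = 0 ∨ ψ z = 0 := by
    by_contra! h
    linarith [(hsupp h.1).2, (hsupp h.2).1]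
  calc |ψ z| ≤ |ψ (z + (2 * R + 1)) - ψ z| := by rcases hzero with h | h <;> simp [h]
    _ ≤ K * (2 * R + 1) := by
        simpa [abs_of_nonneg (by linarith : 0 ≤ 2 * R + 1)] using hlip z (2 * R + 1)

theorem support_shift_sub_subset (hsupp : support ψ ⊆ Icc (-R) R) (h : ℝ) :
    support (fun y => ψ (y + h) - ψ y) ⊆ Icc (-(R + |h|)) (R + |h|) := by
  intro y hy
  by_cases hψy : ψ y = 0
  · have hyh := hsupp (show ψ (y + h) ≠ 0 by simpa [hψy] using hy)
    constructor <;> linarith [hyh.1, hyh.2, le_abs_self h, neg_abs_le h]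
  · have hy' := hsupp hψy
    constructor <;> linarith [hy'.1, hy'.2, abs_nonneg h]

end LipschitzBump

noncomputable def waveletIntegrand (W : ℝ → ℝ → ℝ) (φ : ℝ → ℝ) (x a b : ℝ) : ℝ :=
  (a ^ 2)⁻¹ * W a b * (|a| ^ (-(1 : ℝ) / 2) * φ ((x - b) / a))

section WaveletIntegrand

variable {W : ℝ → ℝ → ℝ} {φ : ℝ → ℝ} {x a : ℝ}

theorem support_waveletIntegrand_subset {ρ : ℝ} (ha : a ≠ 0) (hφ : support φ ⊆ Icc (-ρ) ρ) :
    support (waveletIntegrand W φ x a) ⊆ closedBall x (ρ * |a|) := by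
  intro b hb
  have hb' : (x - b) / a ∈ Icc (-ρ) ρ :=
    hφ fun h => hb (by rw [waveletIntegrand, h, mul_zero, mul_zero])
  rw [mem_closedBall, dist_comm, Real.dist_eq, ← div_le_iff₀ (abs_pos.mpr ha), ← abs_div]
  exact abs_le.mpr hb'

theorem abs_waveletIntegrand_le {c m b : ℝ} (hW : |W a b| ≤ c) (hφ : ∀ y, |φ y| ≤ m) :
    |waveletIntegrand W φ x a b| ≤ (a ^ 2)⁻¹ * c * (|a| ^ (-(1 : ℝ) / 2) * m) := by
  have hc : 0 ≤ c := (abs_nonneg _).trans hW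
  rw [waveletIntegrand, abs_mul, abs_mul, abs_mul, abs_of_nonneg (by positivity : 0 ≤ (a ^ 2)⁻¹),
    abs_of_nonneg (by positivity : (0 : ℝ) ≤ |a| ^ (-(1 : ℝ) / 2))]
  gcongr
  exact hφ _

theorem integrable_waveletIntegrand {ρ c m : ℝ} (ha : a ≠ 0) (hWm : Measurable (W a))
    (hφm : Measurable φ) (hφ : support φ ⊆ Icc (-ρ) ρ) (hW : ∀ b, |W a b| ≤ c)
    (hφb : ∀ y, |φ y| ≤ m) :
    Integrable (waveletIntegrand W φ x a) := by
  refine (integrableOn_iff_integrable_of_support_subset (support_waveletIntegrand_subset ha hφ)).mp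
    (Measure.integrableOn_of_bounded measure_closedBall_lt_top.ne ?_
      (Filter.Eventually.of_forall fun b => abs_waveletIntegrand_le (hW b) hφb))
  unfold waveletIntegrand
  fun_prop

theorem abs_integral_waveletIntegrand_le {ρ C α m : ℝ} (ha : a ≠ 0) (hρ : 0 ≤ ρ)
    (hφ : support φ ⊆ Icc (-ρ) ρ) (hW : ∀ b, |W a b| ≤ C * |a| ^ (α + 1 / 2))
    (hφb : ∀ y, |φ y| ≤ m) :
    |∫ b, waveletIntegrand W φ x a b| ≤ 2 * C * m * ρ * |a| ^ (α - 1) := by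
  have ha' : 0 < |a| := abs_pos.mpr ha
  rw [← setIntegral_eq_integral_of_forall_compl_eq_zero
    fun b hb => notMem_support.mp fun h => hb (support_waveletIntegrand_subset ha hφ h)]
  refine (norm_setIntegral_le_of_norm_le_const measure_closedBall_lt_top
    fun b _ => (norm_eq_abs _).trans_le (abs_waveletIntegrand_le (hW b) hφb)).trans_eq ?_
  have hpow : |a| ^ (α + 1 / 2) * |a| ^ (-(1 : ℝ) / 2) = |a| ^ α := by
    rw [← rpow_add ha']; norm_num
  rw [volume_real_closedBall (by positivity), ← sq_abs, rpow_sub_one ha'.ne', ← hpow]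
  field_simp

theorem waveletIntegrand_add_sub {δ b : ℝ} :
    waveletIntegrand W φ (x + δ) a b - waveletIntegrand W φ x a b
      = waveletIntegrand W (fun y => φ (y + δ / a) - φ y) x a b := by
  simp only [waveletIntegrand]
  rw [show (x + δ - b) / a = (x - b) / a + δ / a by ring]
  ring

theorem stronglyMeasurable_integral_waveletIntegrand (hW : Measurable (uncurry W))
    (hφ : Measurable φ) : StronglyMeasurable fun a => ∫ b, waveletIntegrand W φ x a b := by
  refine StronglyMeasurable.integral_prod_right' (f := fun p => waveletIntegrand W φ x p.1 p.2) ?_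
  refine Measurable.stronglyMeasurable ?_
  unfold waveletIntegrand
  fun_prop

end WaveletIntegrand

theorem abs_integral_waveletIntegrand_sub_le {W : ℝ → ℝ → ℝ} {ψ : ℝ → ℝ} {K R C α x δ a : ℝ}
    (hlip : ∀ z t, |ψ (z + t) - ψ z| ≤ K * |t|) (hsupp : support ψ ⊆ Icc (-R) R) (hR : 0 ≤ R)
    (hWm : Measurable (W a)) (hW : ∀ b, |W a b| ≤ C * |a| ^ (α + 1 / 2))
    (ha : a ≠ 0) (hδa : |δ| ≤ |a|) :
    |(∫ b, waveletIntegrand W ψ (x + δ) a b) - ∫ b, waveletIntegrand W ψ x a b|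
      ≤ 2 * C * K * (R + 1) * |δ| * |a| ^ (α - 2) := by
  have hψ : Continuous ψ := (lipschitzWith_of_forall_abs_sub_le hlip).continuous
  have hψb := abs_le_of_forall_abs_sub_le_of_support_subset hlip hsupp hR
  have hshift : |δ / a| ≤ 1 := by
    rw [abs_div]; exact div_le_one_of_le₀ hδa (abs_nonneg a)
  have hsupp' : support (fun y => ψ (y + δ / a) - ψ y) ⊆ Icc (-(R + 1)) (R + 1) :=
    (support_shift_sub_subset hsupp _).trans (Icc_subset_Icc (by linarith) (by linarith))
  rw [← integral_sub (integrable_waveletIntegrand ha hWm hψ.measurable hsupp hW hψb)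
    (integrable_waveletIntegrand ha hWm hψ.measurable hsupp hW hψb)]
  simp_rw [waveletIntegrand_add_sub]
  refine (abs_integral_waveletIntegrand_le ha (by linarith) hsupp' hW
    fun y => hlip y (δ / a)).trans_eq ?_
  rw [abs_div, show α - 2 = α - 1 - 1 by ring]
  simp only [rpow_sub_one (abs_pos.mpr ha).ne']
  field_simp

/-- Eqs. (23)–(24) in the appendix proof of Theorem 3.2: the small-scale part `f_S` of the
wavelet reconstruction, built from coefficients `W` decaying like `C · |a|^(α + 1/2)` and a
compactly supported Lipschitz reconstruction wavelet `ψ₂`, is Hölder continuous with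
exponent `α`. -/
theorem small_scale_part_holder
    (R K : ℝ) (hR : 0 < R)
    (ψ₂ : ℝ → ℝ) (W : ℝ → ℝ → ℝ) (fS : ℝ → ℝ) (α C : ℝ)
    (hψ₂_lip : ∀ z t : ℝ, |ψ₂ (z + t) - ψ₂ z| ≤ K * |t|)
    (hψ₂_supp : Function.support ψ₂ ⊆ Set.Icc (-R) R)
    (hα_pos : 0 < α) (hα_lt : α < 1) (hC : 0 ≤ C)
    (hW_meas : Measurable (Function.uncurry W))
    (h_decay : ∀ a : ℝ, 0 < |a| → |a| ≤ 1 → ∀ b : ℝ, |W a b| ≤ C * |a| ^ (α + 1 / 2))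
    (hfS : ∀ x : ℝ,
      fS x = ∫ a in {a : ℝ | 0 < |a| ∧ |a| ≤ 1},
               ∫ b : ℝ, (a ^ 2)⁻¹ * W a b * (|a| ^ (-(1 : ℝ) / 2) * ψ₂ ((x - b) / a))) :
    ∃ C'' : ℝ, 0 ≤ C'' ∧ ∀ x δ : ℝ, 0 < |δ| → |δ| ≤ 1 →
      |fS (x + δ) - fS x| ≤ C'' * |δ| ^ α := by
  have hfS' : ∀ x, fS x = ∫ a in abs ⁻¹' Ioc 0 1, ∫ b, waveletIntegrand W ψ₂ x a b := hfS
  have hK := nonneg_of_forall_abs_sub_le hψ₂_lip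
  have hψ₂ : Continuous ψ₂ := (lipschitzWith_of_forall_abs_sub_le hψ₂_lip).continuous
  set M := K * (2 * R + 1)
  have hscale : ∀ x a, |a| ∈ Ioc 0 1 →
      |∫ b, waveletIntegrand W ψ₂ x a b| ≤ 2 * C * M * R * |a| ^ (α - 1) := fun x a ha =>
    abs_integral_waveletIntegrand_le (abs_pos.mp ha.1) hR.le hψ₂_supp (h_decay a ha.1 ha.2)
      (abs_le_of_forall_abs_sub_le_of_support_subset hψ₂_lip hψ₂_supp hR.le)
  have hint : ∀ x, IntegrableOn (fun a => ∫ b, waveletIntegrand W ψ₂ x a b) (abs ⁻¹' Ioc 0 1) :=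
    fun x => integrableOn_abs_preimage_of_abs_le_rpow hα_pos
      (stronglyMeasurable_integral_waveletIntegrand hW_meas hψ₂.measurable).aestronglyMeasurable
      (hscale x)
  have hα₁ : 0 < 1 - α := by linarith
  refine ⟨2 * (2 * (2 * C * M * R)) / α + 2 * (2 * C * K * (R + 1)) / (1 - α), by positivity,
    fun x δ hδ hδ₁ => ?_⟩
  rw [hfS', hfS']
  refine abs_setIntegral_sub_le_of_scale_bounds hα_pos hα_lt (by positivity) hδ hδ₁ (hint x)
    (hint (x + δ)) (fun a ha => ?_) (fun a ha => ?_)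
  · have ha₁ : |a| ∈ Ioc 0 1 := ⟨ha.1, ha.2.trans hδ₁⟩
    linarith [abs_sub (∫ b, waveletIntegrand W ψ₂ (x + δ) a b) (∫ b, waveletIntegrand W ψ₂ x a b),
      hscale (x + δ) a ha₁, hscale x a ha₁]
  · exact abs_integral_waveletIntegrand_sub_le hψ₂_lip hψ₂_supp hR.le
      (hW_meas.comp measurable_prodMk_left) (h_decay a (hδ.trans ha.1) ha.2)
      (abs_pos.mp (hδ.trans ha.1)) ha.1.le
end
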